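/- arXiv:1802.07242 — 8 statements merged into one kernel-verified Lean document; each statement's English description precedes it below -/
import Mathlib

section
/- Let U_i, U_j be finite sets with |U_i| = n_i, |U_j| = n_j, and quorums q_i ≤ n_i, q_j ≤ n_j. Suppose S ⊆ U_i with |S| ≥ q_i, and |U_i ∩ U_j| > (n_i - q_i) + (n_j - q_j). Then |S ∩ U_j| > n_j - q_j. -/
theorem stmt_0 {α : Type*} [DecidableEq α] (Ui Uj S : Finset α) (qi qj : ℕ)
    (hqi : qi ≤ Ui.card) (hqj : qj ≤ Uj.card)
    (hS : S ⊆ Ui) (hScard : qi ≤ S.card)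
    (hover : (Ui ∩ Uj).card > (Ui.card - qi) + (Uj.card - qj)) :
    (S ∩ Uj).card > Uj.card - qj := by
  have h1 : (Ui ∩ Uj).card ≤ (S ∩ Uj).card + ((Ui ∩ Uj) \ S).card := by
    have := Finset.card_le_card (show Ui ∩ Uj ⊆ (S ∩ Uj) ∪ ((Ui ∩ Uj) \ S) by
      intro x hx
      by_cases hxS : x ∈ S
      · exact Finset.mem_union_left _ (Finset.mem_inter.2 ⟨hxS, (Finset.mem_inter.1 hx).2⟩)
      · exact Finset.mem_union_right _ (Finset.mem_sdiff.2 ⟨hx, hxS⟩))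
    calc (Ui ∩ Uj).card ≤ ((S ∩ Uj) ∪ ((Ui ∩ Uj) \ S)).card := this
      _ ≤ (S ∩ Uj).card + ((Ui ∩ Uj) \ S).card := Finset.card_union_le _ _
  have h2 : ((Ui ∩ Uj) \ S).card ≤ (Ui \ S).card :=
    Finset.card_le_card (Finset.sdiff_subset_sdiff Finset.inter_subset_left le_rfl)
  have h3 : (Ui \ S).card = Ui.card - S.card := Finset.card_sdiff_of_subset hS
  have h4 : S.card ≤ Ui.card := Finset.card_le_card hS
  omega
end

section
/- Let U_i, U_j be finite sets with |U_i| = n_i, |U_j| = n_j, quorums q_i ≤ n_i, q_j ≤ n_j. Assume n_j - q_j < |U_i ∩ U_j| ≤ (n_i - q_i) + (n_j - q_j). Then there exists C ⊆ U_i ∩ U_j with |C| = n_j - q_j such that |(U_i \ U_j) ∪ C| ≥ q_i and |U_j \ C| ≥ q_j. -/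
theorem stmt_2 {α : Type*} [DecidableEq α] (Ui Uj : Finset α) (qi qj : ℕ)
    (hqi : qi ≤ Ui.card) (hqj : qj ≤ Uj.card)
    (hlow : Uj.card - qj < (Ui ∩ Uj).card)
    (hhigh : (Ui ∩ Uj).card ≤ (Ui.card - qi) + (Uj.card - qj)) :
    ∃ C : Finset α, C ⊆ Ui ∩ Uj ∧ C.card = Uj.card - qj ∧
      qi ≤ ((Ui \ Uj) ∪ C).card ∧ qj ≤ (Uj \ C).card := by
  obtain ⟨C, hCsub, hCcard⟩ := Finset.exists_subset_card_eq (s := Ui ∩ Uj) (n := Uj.card - qj) hlow.le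
  refine ⟨C, hCsub, hCcard, ?_, ?_⟩
  · have hdisj : Disjoint (Ui \ Uj) C := by
      refine Finset.disjoint_left.mpr fun a ha haC => ?_
      exact (Finset.mem_sdiff.mp ha).2 (Finset.mem_inter.mp (hCsub haC)).2
    rw [Finset.card_union_of_disjoint hdisj, ← Finset.sdiff_inter_self_left Ui Uj,
      Finset.card_sdiff_of_subset Finset.inter_subset_left,
      hCcard]
    have h1 : (Ui ∩ Uj).card ≤ Ui.card := Finset.card_le_card Finset.inter_subset_left
    omega
  · have hCUj : C ⊆ Uj := hCsub.trans Finset.inter_subset_right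
    rw [Finset.card_sdiff_of_subset hCUj, hCcard]
    omega
end

section
/- Let U_i, U_j be finite sets with n_i = |U_i|, n_j = |U_j|, O = |U_i ∩ U_j|, and t a natural number with t ≤ O. Suppose S ⊆ U_i with |S| = m and B ⊆ U_i ∩ U_j with |B| ≤ t, where S is the set of nodes validating ledger L as seen by P_i and B the Byzantine nodes. Let H = (S ∩ U_j) \ B be honest nodes in U_j that validated L. Then the number of nodes in U_j that could send P_j a validation for a conflicting ledger, namely |U_j \ H|, is at most n_i + n_j - O - m + t. -/
theorem stmt_4 {α : Type*} [DecidableEq α] (Ui Uj S B : Finset α) (m t : ℕ)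
    (ht : t ≤ (Ui ∩ Uj).card)
    (hS : S ⊆ Ui) (hm : S.card = m)
    (hB : B ⊆ Ui ∩ Uj) (hBt : B.card ≤ t) :
    (((Uj \ ((S ∩ Uj) \ B)).card : ℤ)) ≤
      (Ui.card : ℤ) + (Uj.card : ℤ) - ((Ui ∩ Uj).card : ℤ) - (m : ℤ) + (t : ℤ) := by
  have hH : (S ∩ Uj) \ B ⊆ Uj := (Finset.sdiff_subset).trans Finset.inter_subset_right
  have h1 : (Uj \ ((S ∩ Uj) \ B)).card = Uj.card - ((S ∩ Uj) \ B).card :=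
    Finset.card_sdiff_of_subset hH
  have h2 : (S ∩ Uj).card ≤ ((S ∩ Uj) \ B).card + B.card := by
    have := Finset.card_sdiff_add_card (S ∩ Uj) B
    have h := Finset.card_le_card (Finset.subset_union_left : S ∩ Uj ⊆ (S ∩ Uj) ∪ B)
    omega
  have h3 : S.card + (Ui ∩ Uj).card ≤ Ui.card + (S ∩ Uj).card := by
    have hSi : S ∩ (Ui ∩ Uj) = S ∩ Uj := by
      ext x; simp only [Finset.mem_inter]
      exact ⟨fun ⟨a, _, c⟩ => ⟨a, c⟩, fun ⟨a, c⟩ => ⟨a, hS a, c⟩⟩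
    have huni := Finset.card_union_add_card_inter S (Ui ∩ Uj)
    have hcard : (S ∪ Ui ∩ Uj).card ≤ Ui.card :=
      Finset.card_le_card (Finset.union_subset hS Finset.inter_subset_left)
    rw [hSi] at huni
    omega
  have hHc : ((S ∩ Uj) \ B).card ≤ Uj.card := Finset.card_le_card hH
  omega
end

section
/- Let U_i, U_j be finite sets with n_i = |U_i|, n_j = |U_j|, O = |U_i ∩ U_j|, quorums q_i ≤ n_i, q_j ≤ n_j, and t a natural number. If O > (n_i - q_i) + (n_j - q_j) + t, then for any S ⊆ U_i with |S| ≥ q_i and any Byzantine set B ⊆ U_i ∩ U_j with |B| ≤ t, we have |U_j \ ((S ∩ U_j) \ B)| < q_j. -/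
theorem stmt_5 {α : Type*} [DecidableEq α] (Ui Uj : Finset α) (qi qj t : ℕ)
    (hqi : qi ≤ Ui.card) (hqj : qj ≤ Uj.card)
    (hover : (Ui ∩ Uj).card > (Ui.card - qi) + (Uj.card - qj) + t) :
    ∀ S : Finset α, S ⊆ Ui → qi ≤ S.card →
      ∀ B : Finset α, B ⊆ Ui ∩ Uj → B.card ≤ t →
        (Uj \ ((S ∩ Uj) \ B)).card < qj := by
  intro S hSU hqS B hB hBt
  -- |S ∩ Uj| ≥ |Ui ∩ Uj| - (|Ui| - qi)
  have h1 : (Ui ∩ Uj).card ≤ (S ∩ Uj).card + (Ui.card - qi) := by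
    have hsub : Ui ∩ Uj ⊆ (S ∩ Uj) ∪ (Ui \ S) := by
      intro x hx
      simp only [Finset.mem_inter, Finset.mem_union, Finset.mem_sdiff] at *
      tauto
    calc (Ui ∩ Uj).card ≤ ((S ∩ Uj) ∪ (Ui \ S)).card := Finset.card_le_card hsub
      _ ≤ (S ∩ Uj).card + (Ui \ S).card := Finset.card_union_le _ _
      _ ≤ (S ∩ Uj).card + (Ui.card - qi) := by
          have := Finset.card_sdiff_of_subset hSU
          omega
  have h2 : ((S ∩ Uj) \ B).card + t ≥ (S ∩ Uj).card := by
    have := Finset.le_card_sdiff B (S ∩ Uj)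
    omega
  have h3 : ((S ∩ Uj) \ B).card ≤ Uj.card := by
    apply Finset.card_le_card
    intro x hx
    simp only [Finset.mem_sdiff, Finset.mem_inter] at hx
    exact hx.1.2
  have hXsub : (S ∩ Uj) \ B ⊆ Uj := fun x hx => by
    simp only [Finset.mem_sdiff, Finset.mem_inter] at hx; exact hx.1.2
  have h4 : (Uj \ ((S ∩ Uj) \ B)).card = Uj.card - ((S ∩ Uj) \ B).card :=
    Finset.card_sdiff_of_subset hXsub
  omega
end

section
/- Let U_i, U_j be finite sets with n_i = |U_i|, n_j = |U_j|, O = |U_i ∩ U_j|, quorums q_i ≤ n_i, q_j ≤ n_j, and t ≤ min(O, n_i - q_i, n_j - q_j) a natural number. If O ≤ (n_i - q_i) + (n_j - q_j) + t, then there exist S ⊆ U_i with |S| ≥ q_i and B ⊆ U_i ∩ U_j with |B| ≤ t such that |U_j \ ((S ∩ U_j) \ B)| ≥ q_j. -/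
theorem stmt_6 {α : Type*} [DecidableEq α] (Ui Uj : Finset α) (qi qj t : ℕ)
    (hqi : qi ≤ Ui.card) (hqj : qj ≤ Uj.card)
    (ht : t ≤ min ((Ui ∩ Uj).card) (min (Ui.card - qi) (Uj.card - qj)))
    (hover : (Ui ∩ Uj).card ≤ (Ui.card - qi) + (Uj.card - qj) + t) :
    ∃ S : Finset α, S ⊆ Ui ∧ qi ≤ S.card ∧
      ∃ B : Finset α, B ⊆ Ui ∩ Uj ∧ B.card ≤ t ∧
        qj ≤ (Uj \ ((S ∩ Uj) \ B)).card := by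
  simp only [le_min_iff] at ht
  obtain ⟨ht1, ht2, ht3⟩ := ht
  -- choose D ⊆ Ui ∩ Uj of size min (O) (ni - qi)
  obtain ⟨D, hD, hDcard⟩ := Finset.exists_subset_card_eq
    (s := Ui ∩ Uj) (n := min (Ui ∩ Uj).card (Ui.card - qi)) (min_le_left _ _)
  refine ⟨Ui \ D, Finset.sdiff_subset, ?_, ?_⟩
  · have := Finset.card_sdiff_of_subset (hD.trans Finset.inter_subset_left)
    have hDU : D.card ≤ Ui.card := Finset.card_le_card (hD.trans Finset.inter_subset_left)
    omega
  · have hSUj : (Ui \ D) ∩ Uj = (Ui ∩ Uj) \ D := by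
      ext x; simp [Finset.mem_sdiff, Finset.mem_inter]; tauto
    obtain ⟨B, hB, hBcard⟩ := Finset.exists_subset_card_eq
      (s := (Ui ∩ Uj) \ D) (n := min t ((Ui ∩ Uj) \ D).card) (min_le_right _ _)
    refine ⟨B, hB.trans Finset.sdiff_subset, by omega, ?_⟩
    rw [hSUj]
    have hXsub : ((Ui ∩ Uj) \ D) \ B ⊆ Uj :=
      (Finset.sdiff_subset.trans Finset.sdiff_subset).trans Finset.inter_subset_right
    have hg : ((Ui ∩ Uj) \ D).card = (Ui ∩ Uj).card - D.card := Finset.card_sdiff_of_subset hD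
    rw [Finset.card_sdiff_of_subset hXsub, Finset.card_sdiff_of_subset hB, hg]
    omega
end

section
/- Let U_i, U_j be finite sets with n_i = |U_i|, n_j = |U_j|, O = |U_i ∩ U_j|, quorum q_i ≤ n_i, and t a natural number. If O > n_j/2 + (n_i - q_i) + t (as rationals), then for any S ⊆ U_i with |S| ≥ q_i and any B ⊆ U_i ∩ U_j with |B| ≤ t, we have |(S ∩ U_j) \ B| > n_j/2. -/
theorem stmt_7 {α : Type*} [DecidableEq α] (Ui Uj : Finset α) (qi t : ℕ)
    (hqi : qi ≤ Ui.card)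
    (hover : (((Ui ∩ Uj).card : ℚ)) > (Uj.card : ℚ) / 2 + ((Ui.card : ℚ) - (qi : ℚ)) + (t : ℚ)) :
    ∀ S : Finset α, S ⊆ Ui → qi ≤ S.card →
      ∀ B : Finset α, B ⊆ Ui ∩ Uj → B.card ≤ t →
        ((((S ∩ Uj) \ B).card : ℚ)) > (Uj.card : ℚ) / 2 := by
  intro S hS hScard B _ hBcard
  have hsub : Ui ∩ Uj ⊆ (S ∩ Uj) ∪ (Ui \ S) := by
    intro x hx
    simp only [Finset.mem_inter, Finset.mem_union, Finset.mem_sdiff] at *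
    by_cases hxS : x ∈ S
    · exact Or.inl ⟨hxS, hx.2⟩
    · exact Or.inr ⟨hx.1, hxS⟩
  have h1 : (Ui ∩ Uj).card ≤ (S ∩ Uj).card + (Ui \ S).card :=
    le_trans (Finset.card_le_card hsub) (Finset.card_union_le _ _)
  have h2 : (Ui \ S).card = Ui.card - S.card := Finset.card_sdiff_of_subset hS
  have hSUi : S.card ≤ Ui.card := Finset.card_le_card hS
  have h3 : (S ∩ Uj).card ≤ ((S ∩ Uj) \ B).card + B.card :=
    le_trans (Finset.card_le_card (fun x hx => by
      by_cases hxB : x ∈ B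
      · exact Finset.mem_union_right _ hxB
      · exact Finset.mem_union_left _ (Finset.mem_sdiff.mpr ⟨hx, hxB⟩)))
      (Finset.card_union_le _ _)
  have h1' : ((Ui ∩ Uj).card : ℚ) ≤ ((S ∩ Uj).card : ℚ) + (Ui.card : ℚ) - (S.card : ℚ) := by
    rw [h2] at h1
    have h1n : ((Ui ∩ Uj).card : ℚ) ≤ ((S ∩ Uj).card : ℚ) + (((Ui.card - S.card : ℕ)) : ℚ) := by
      exact_mod_cast h1
    rw [Nat.cast_sub hSUi] at h1n
    linarith
  have h3' : ((S ∩ Uj).card : ℚ) ≤ (((S ∩ Uj) \ B).card : ℚ) + (B.card : ℚ) := by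
    exact_mod_cast h3
  have hB' : ((B.card : ℚ)) ≤ (t : ℚ) := by exact_mod_cast hBcard
  have hS' : (qi : ℚ) ≤ (S.card : ℚ) := by exact_mod_cast hScard
  linarith
end

section
/- Let U_i, U_j, S be finite sets with S ⊆ U_i, |S| ≥ q_i, and |U_i ∩ U_j| > n_j - q_j + (n_i - q_i) where n_i = |U_i|, n_j = |U_j|, q_i, q_j quorums. Then for any set T ⊆ U_j with T ∩ S = ∅, we have |T| < q_j. -/
theorem stmt_11 {α : Type*} [DecidableEq α] (Ui Uj S : Finset α) (qi qj : ℕ)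
    (hqi : qi ≤ Ui.card) (hqj : qj ≤ Uj.card)
    (hS : S ⊆ Ui) (hScard : qi ≤ S.card)
    (hover : (Ui ∩ Uj).card > (Uj.card - qj) + (Ui.card - qi)) :
    ∀ T : Finset α, T ⊆ Uj → T ∩ S = ∅ → T.card < qj := by
  intro T hTUj hTS
  -- S ∩ Uj ⊆ Uj \ T
  have hsub : S ∩ Uj ⊆ Uj \ T := by
    intro x hx
    simp only [Finset.mem_inter] at hx
    refine Finset.mem_sdiff.mpr ⟨hx.2, fun hxT => ?_⟩
    have : x ∈ T ∩ S := Finset.mem_inter.mpr ⟨hxT, hx.1⟩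
    simp [hTS] at this
  -- |Ui ∩ Uj| ≤ |S ∩ Uj| + |Ui \ S|
  have h1 : (Ui ∩ Uj).card ≤ (S ∩ Uj).card + (Ui \ S).card := by
    have : Ui ∩ Uj ⊆ (S ∩ Uj) ∪ (Ui \ S) := by
      intro x hx
      simp only [Finset.mem_inter] at hx
      by_cases hxS : x ∈ S
      · exact Finset.mem_union_left _ (Finset.mem_inter.mpr ⟨hxS, hx.2⟩)
      · exact Finset.mem_union_right _ (Finset.mem_sdiff.mpr ⟨hx.1, hxS⟩)
    calc (Ui ∩ Uj).card ≤ ((S ∩ Uj) ∪ (Ui \ S)).card := Finset.card_le_card this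
      _ ≤ _ := Finset.card_union_le _ _
  have h2 : (Ui \ S).card = Ui.card - S.card := Finset.card_sdiff_of_subset hS
  have h3 : (Uj \ T).card = Uj.card - T.card := Finset.card_sdiff_of_subset hTUj
  have h4 : (S ∩ Uj).card ≤ Uj.card - T.card := h3 ▸ Finset.card_le_card hsub
  have hTcard : T.card ≤ Uj.card := Finset.card_le_card hTUj
  omega
end

section
/- Let U_i, U_j be finite sets with n_i = |U_i|, n_j = |U_j|, O = |U_i ∩ U_j|, and let m, t be naturals with t ≤ O and n_i - O + t ≤ m ≤ n_i. Then there is a configuration achieving exactly the lemma-2 bound: there exist S ⊆ U_i with |S| = m and B ⊆ S ∩ U_j with |B| = t such that |(S ∩ U_j) \ B| = O + m - n_i - t, achieved by taking U_i \ U_j ⊆ S. -/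
theorem stmt_15 {α : Type*} [DecidableEq α] (Ui Uj : Finset α) (m t : ℕ)
    (ht : t ≤ (Ui ∩ Uj).card)
    (hml : Ui.card - (Ui ∩ Uj).card + t ≤ m) (hmu : m ≤ Ui.card) :
    ∃ S : Finset α, S ⊆ Ui ∧ S.card = m ∧ Ui \ Uj ⊆ S ∧
      ∃ B : Finset α, B ⊆ S ∩ Uj ∧ B.card = t ∧
        ((((S ∩ Uj) \ B).card : ℤ)) =
          ((Ui ∩ Uj).card : ℤ) + (m : ℤ) - (Ui.card : ℤ) - (t : ℤ) := by
  have hinter : Ui ∩ Uj ⊆ Ui := Finset.inter_subset_left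
  have hsd : (Ui \ Uj).card = Ui.card - (Ui ∩ Uj).card := by
    have := Finset.card_sdiff_add_card_inter Ui Uj; omega
  have hOle : (Ui ∩ Uj).card ≤ Ui.card := Finset.card_le_card hinter
  set k := m - (Ui \ Uj).card with hk
  have hsdm : (Ui \ Uj).card ≤ m := by omega
  have hkO : k ≤ (Ui ∩ Uj).card := by omega
  have htk : t ≤ k := by omega
  obtain ⟨T, hT, hTcard⟩ := Finset.exists_subset_card_eq hkO
  obtain ⟨B, hB, hBcard⟩ := Finset.exists_subset_card_eq (show t ≤ T.card by omega)
  have hTj : T ⊆ Uj := hT.trans Finset.inter_subset_right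
  have hdisj : Disjoint (Ui \ Uj) T := by
    exact Finset.disjoint_left.mpr (fun x hx hxT => (Finset.mem_sdiff.mp hx).2 (hTj hxT))
  refine ⟨(Ui \ Uj) ∪ T, ?_, ?_, Finset.subset_union_left, B, ?_, hBcard, ?_⟩
  · exact Finset.union_subset (Finset.sdiff_subset) (hT.trans hinter)
  · rw [Finset.card_union_of_disjoint hdisj, hTcard]; omega
  · have hST : ((Ui \ Uj) ∪ T) ∩ Uj = T := by
      rw [Finset.union_inter_distrib_right, Finset.sdiff_inter_self,
        Finset.empty_union, Finset.inter_eq_left.mpr hTj]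
    rw [hST]; exact hB
  · have hST : ((Ui \ Uj) ∪ T) ∩ Uj = T := by
      rw [Finset.union_inter_distrib_right, Finset.sdiff_inter_self,
        Finset.empty_union, Finset.inter_eq_left.mpr hTj]
    rw [hST, Finset.card_sdiff_of_subset hB, hTcard, hBcard]
    push_cast
    omega
end
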